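/- arXiv:1307.5398 — 5 statements merged into one kernel-verified Lean document; each statement's English description precedes it below -/
import Mathlib

section
/- For every W in H_h, the inner products (s_{Nx}W, W)_{H_h} and (s_{Ny}W, W)_{H_h} are real and satisfy (s_{Nx}W, W)_{H_h} >= (2/3)*||W||_{H_h}^2 and (s_{Ny}W, W)_{H_h} >= (2/3)*||W||_{H_h}^2. -/
/-!
On interior mesh points `(h²/12) ∂∂̄ W = (W₊ - 2W + W₋)/12`, where `W₊`, `W₋` are the two
neighbours along the line, so `(s_N W, W) = (5/6)‖W‖² + (z + z̄)/12` with `z = (W₊, W)`: since `W`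
vanishes on the boundary, pairing with the backward neighbour gives the conjugate of pairing with the
forward one. Hence `(s_N W, W)` is real, and `|z| ≤ ‖W‖²` (from `|x ȳ| ≤ (|x|² + |y|²)/2`) gives
`(s_N W, W) ≥ (5/6 - 1/6)‖W‖²`. Along `x` the lines are the infinite columns, along `y` the finite
rows. "Real and at least `r`" is the inequality `(r : ℂ) ≤ ·` of the partial order on `ℂ`.
-/

noncomputable section

/-- Second difference quotient in `x`, with output set to `0` at the boundary
indices `j = 0`, `k = 0`, `k = K` (and, harmlessly, off the mesh `k > K`). -/
def ddx (K : ℕ) (hx : ℝ) (W : ℕ → ℕ → ℂ) : ℕ → ℕ → ℂ := fun j k =>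
  if j = 0 ∨ k = 0 ∨ K ≤ k then 0
  else (W (j + 1) k - 2 * W j k + W (j - 1) k) / (hx : ℂ) ^ 2

/-- Second difference quotient in `y`, with output set to `0` at the boundary. -/
def ddy (K : ℕ) (hy : ℝ) (W : ℕ → ℕ → ℂ) : ℕ → ℕ → ℂ := fun j k =>
  if j = 0 ∨ k = 0 ∨ K ≤ k then 0
  else (W j (k + 1) - 2 * W j k + W j (k - 1)) / (hy : ℂ) ^ 2

/-- Numerov average in `x`: `s_{Nx} = I + (h_x^2/12) ∂_x ∂̄_x`. -/
def sNx (K : ℕ) (hx : ℝ) (W : ℕ → ℕ → ℂ) : ℕ → ℕ → ℂ := fun j k =>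
  W j k + ((hx ^ 2 / 12 : ℝ) : ℂ) * ddx K hx W j k

/-- Numerov average in `y`: `s_{Ny} = I + (h_y^2/12) ∂_y ∂̄_y`. -/
def sNy (K : ℕ) (hy : ℝ) (W : ℕ → ℕ → ℂ) : ℕ → ℕ → ℂ := fun j k =>
  W j k + ((hy ^ 2 / 12 : ℝ) : ℂ) * ddy K hy W j k

/-- Membership in the Hilbert space `H_h` of mesh functions on the semi-infinite strip:
vanishing at `j = 0`, `k = 0`, `k = K`, and square-summable. -/
def memH (K : ℕ) (W : ℕ → ℕ → ℂ) : Prop :=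
  (∀ k, W 0 k = 0) ∧ (∀ j, W j 0 = 0) ∧ (∀ j, W j K = 0) ∧
    Summable fun j : ℕ => ∑ k ∈ Finset.Icc 1 (K - 1), ‖W j k‖ ^ 2

/-- The inner product `(U,W)_{H_h} = ∑_{j ≥ 1} ∑_{k=1}^{K-1} U_{j,k} conj(W_{j,k}) h_x h_y`. -/
def innH (K : ℕ) (hx hy : ℝ) (U W : ℕ → ℕ → ℂ) : ℂ :=
  ∑' j : ℕ, ∑ k ∈ Finset.Icc 1 (K - 1),
    U (j + 1) k * (starRingEnd ℂ) (W (j + 1) k) * ((hx * hy : ℝ) : ℂ)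

open Finset ComplexConjugate
open scoped ComplexOrder

lemma sum_Icc_one_eq_sum_range {M : Type*} [AddCommMonoid M] (n : ℕ) (f : ℕ → M) :
    ∑ k ∈ Icc 1 n, f k = ∑ i ∈ range n, f (i + 1) := by
  rw [range_eq_Ico, sum_Ico_add' f, ← Ico_add_one_right_eq_Icc]

lemma norm_mul_conj_le (x y : ℂ) : ‖x * conj y‖ ≤ (‖x‖ ^ 2 + ‖y‖ ^ 2) / 2 := by
  rw [norm_mul, Complex.norm_conj]
  linarith [two_mul_le_add_sq ‖x‖ ‖y‖]

lemma summable_mul_conj {u v : ℕ → ℂ} (hu : Summable fun j => ‖u j‖ ^ 2)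
    (hv : Summable fun j => ‖v j‖ ^ 2) : Summable fun j => u j * conj (v j) :=
  .of_norm <| .of_nonneg_of_le (fun _ => norm_nonneg _) (fun _ => norm_mul_conj_le _ _)
    ((hu.add hv).div_const 2)

lemma ofReal_le_numerov_combination {N : ℝ} {z : ℂ} (hz : ‖z‖ ≤ N) :
    ((2 / 3 * N : ℝ) : ℂ) ≤ 5 / 6 * N + (z + conj z) / 12 := by
  have hre : -N ≤ z.re := (abs_le.1 ((Complex.abs_re_le_norm z).trans hz)).1
  rw [Complex.add_conj, show (5 / 6 : ℂ) * N + ((2 * z.re : ℝ) : ℂ) / 12 =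
    ((5 / 6 * N + 2 * z.re / 12 : ℝ) : ℂ) by push_cast; ring, Complex.real_le_real]
  linarith

/-- The term of `(s_N a, a)` at the point `i + 1` of a mesh line `a`, whose boundary point is
`a 0`; points are shifted by one so that the sums over a line start at `i = 0`. -/
def numerovTerm (a : ℕ → ℂ) (i : ℕ) : ℂ :=
  (5 / 6 * a (i + 1) + (a (i + 2) + a i) / 12) * conj (a (i + 1))

lemma numerovTerm_eq (a : ℕ → ℂ) (i : ℕ) :
    numerovTerm a i = 5 / 6 * ((‖a (i + 1)‖ ^ 2 : ℝ) : ℂ) +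
      (a (i + 2) * conj (a (i + 1)) + conj (a (i + 1) * conj (a i))) / 12 := by
  rw [numerovTerm, Complex.ofReal_pow, ← Complex.mul_conj', map_mul, Complex.conj_conj]
  ring

section OneDim

variable {a : ℕ → ℂ}

lemma sum_range_shift_mul_conj {n : ℕ} (h0 : a 0 = 0) (hn : a (n + 1) = 0) :
    ∑ i ∈ range n, a (i + 1) * conj (a i) = ∑ i ∈ range n, a (i + 2) * conj (a (i + 1)) := by
  have h := sum_range_succ' (fun i => a (i + 1) * conj (a i)) n
  rw [sum_range_succ, hn, h0] at h
  simpa using h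

lemma norm_sum_range_shift_mul_conj_le {n : ℕ} (hn : a (n + 1) = 0) :
    ‖∑ i ∈ range n, a (i + 2) * conj (a (i + 1))‖ ≤ ∑ i ∈ range n, ‖a (i + 1)‖ ^ 2 := by
  have hshift : ∑ i ∈ range n, ‖a (i + 2)‖ ^ 2 ≤ ∑ i ∈ range n, ‖a (i + 1)‖ ^ 2 := by
    have h := sum_range_succ' (fun i => ‖a (i + 1)‖ ^ 2) n
    rw [sum_range_succ, hn, norm_zero, zero_pow two_ne_zero, add_zero] at h
    linarith [sq_nonneg ‖a (0 + 1)‖]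
  calc ‖∑ i ∈ range n, a (i + 2) * conj (a (i + 1))‖
      ≤ ∑ i ∈ range n, (‖a (i + 2)‖ ^ 2 + ‖a (i + 1)‖ ^ 2) / 2 :=
        (norm_sum_le _ _).trans (sum_le_sum fun i _ => norm_mul_conj_le _ _)
    _ ≤ ∑ i ∈ range n, ‖a (i + 1)‖ ^ 2 := by
        rw [← sum_div, sum_add_distrib]; linarith

lemma ofReal_le_sum_range_numerovTerm {n : ℕ} (h0 : a 0 = 0) (hn : a (n + 1) = 0) :
    ((2 / 3 * ∑ i ∈ range n, ‖a (i + 1)‖ ^ 2 : ℝ) : ℂ) ≤ ∑ i ∈ range n, numerovTerm a i := by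
  have h := ofReal_le_numerov_combination (norm_sum_range_shift_mul_conj_le hn)
  simp only [numerovTerm_eq, sum_add_distrib, ← mul_sum, ← sum_div, ← map_sum,
    sum_range_shift_mul_conj h0 hn]
  push_cast at h ⊢
  exact h

lemma tsum_shift_mul_conj (hs : Summable fun j => ‖a j‖ ^ 2) (h0 : a 0 = 0) :
    ∑' i, a (i + 1) * conj (a i) = ∑' i, a (i + 2) * conj (a (i + 1)) := by
  rw [(summable_mul_conj ((summable_nat_add_iff 1).2 hs) hs).tsum_eq_zero_add, h0]
  simp

lemma norm_tsum_shift_mul_conj_le (hs : Summable fun j => ‖a j‖ ^ 2) :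
    ‖∑' i, a (i + 2) * conj (a (i + 1))‖ ≤ ∑' i, ‖a (i + 1)‖ ^ 2 := by
  have hs1 : Summable fun i => ‖a (i + 1)‖ ^ 2 := (summable_nat_add_iff 1).2 hs
  have hs2 : Summable fun i => ‖a (i + 2)‖ ^ 2 := (summable_nat_add_iff 2).2 hs
  have hshift : ∑' i, ‖a (i + 2)‖ ^ 2 ≤ ∑' i, ‖a (i + 1)‖ ^ 2 := by
    rw [hs1.tsum_eq_zero_add]
    linarith [sq_nonneg ‖a 1‖]
  calc ‖∑' i, a (i + 2) * conj (a (i + 1))‖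
      ≤ ∑' i, (‖a (i + 2)‖ ^ 2 + ‖a (i + 1)‖ ^ 2) / 2 :=
        (norm_tsum_le_tsum_norm (summable_mul_conj hs2 hs1).norm).trans <|
          (summable_mul_conj hs2 hs1).norm.tsum_le_tsum (fun i => norm_mul_conj_le _ _)
            ((hs2.add hs1).div_const 2)
    _ ≤ ∑' i, ‖a (i + 1)‖ ^ 2 := by
        rw [tsum_div_const, (hs2.tsum_add hs1)]; linarith

lemma hasSum_numerovTerm (hs : Summable fun j => ‖a j‖ ^ 2) (h0 : a 0 = 0) :
    HasSum (numerovTerm a) (5 / 6 * ((∑' i, ‖a (i + 1)‖ ^ 2 : ℝ) : ℂ) +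
      (∑' i, a (i + 2) * conj (a (i + 1)) + conj (∑' i, a (i + 2) * conj (a (i + 1)))) / 12) := by
  have hs1 : Summable fun i => ‖a (i + 1)‖ ^ 2 := (summable_nat_add_iff 1).2 hs
  have hs2 : Summable fun i => ‖a (i + 2)‖ ^ 2 := (summable_nat_add_iff 2).2 hs
  have hback : HasSum (fun i => conj (a (i + 1) * conj (a i)))
      (conj (∑' i, a (i + 2) * conj (a (i + 1)))) := by
    rw [← tsum_shift_mul_conj hs h0]
    exact Complex.hasSum_conj'.2 (summable_mul_conj hs1 hs).hasSum
  rw [show numerovTerm a = _ from funext (numerovTerm_eq a)]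
  exact ((Complex.hasSum_ofReal.2 hs1.hasSum).mul_left (5 / 6)).add
    (((summable_mul_conj hs2 hs1).hasSum.add hback).div_const 12)

lemma ofReal_le_tsum_numerovTerm (hs : Summable fun j => ‖a j‖ ^ 2) (h0 : a 0 = 0) :
    ((2 / 3 * ∑' i, ‖a (i + 1)‖ ^ 2 : ℝ) : ℂ) ≤ ∑' i, numerovTerm a i :=
  (hasSum_numerovTerm hs h0).tsum_eq ▸ ofReal_le_numerov_combination (norm_tsum_shift_mul_conj_le hs)

end OneDim

section Mesh

variable {K n : ℕ} {W : ℕ → ℕ → ℂ}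

lemma memH.summable_sq_norm (hW : memH K W) {k : ℕ} (hk : k ≤ K) :
    Summable fun j => ‖W j k‖ ^ 2 := by
  obtain ⟨-, hW0, hWK, hs⟩ := hW
  rcases Nat.eq_zero_or_pos k with rfl | hk0
  · simp [hW0]
  rcases hk.eq_or_lt with rfl | hkK
  · simp [hWK]
  exact hs.of_nonneg_of_le (fun _ => sq_nonneg _) fun j =>
    single_le_sum (f := fun k => ‖W j k‖ ^ 2) (fun _ _ => sq_nonneg _) (mem_Icc.2 ⟨hk0, by omega⟩)

lemma memH.summable_numerovTerm_row (hW : memH K W) {i : ℕ} (hi : i + 2 ≤ K) :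
    Summable fun j => numerovTerm (W (j + 1)) i := by
  have hcol : ∀ k ≤ K, Summable fun j => ‖W (j + 1) k‖ ^ 2 := fun k hk =>
    (summable_nat_add_iff 1).2 (hW.summable_sq_norm hk)
  simp only [numerovTerm_eq]
  exact ((Complex.summable_ofReal.2 (hcol (i + 1) (by omega))).mul_left _).add
    (((summable_mul_conj (hcol (i + 2) hi) (hcol (i + 1) (by omega))).add
      (Complex.summable_conj.2 (summable_mul_conj (hcol (i + 1) (by omega))
        (hcol i (by omega))))).div_const _)

lemma sNx_mul_conj_eq_numerovTerm {hx : ℝ} (hx0 : hx ≠ 0) {i : ℕ} (hi : i + 1 < K) (j : ℕ) :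
    sNx K hx W (j + 1) (i + 1) * conj (W (j + 1) (i + 1)) = numerovTerm (fun j => W j (i + 1)) j := by
  simp only [sNx, ddx, numerovTerm, Nat.add_sub_cancel]
  rw [if_neg (by omega)]
  push_cast
  field_simp
  ring

lemma sNy_mul_conj_eq_numerovTerm {hy : ℝ} (hy0 : hy ≠ 0) {i : ℕ} (hi : i + 1 < K) (j : ℕ) :
    sNy K hy W (j + 1) (i + 1) * conj (W (j + 1) (i + 1)) = numerovTerm (W (j + 1)) i := by
  simp only [sNy, ddy, numerovTerm, Nat.add_sub_cancel]
  rw [if_neg (by omega)]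
  push_cast
  field_simp
  ring

lemma innH_succ (hx hy : ℝ) (U W : ℕ → ℕ → ℂ) :
    innH (n + 1) hx hy U W =
      (∑' j, ∑ i ∈ range n, U (j + 1) (i + 1) * conj (W (j + 1) (i + 1))) * ((hx * hy : ℝ) : ℂ) := by
  simp only [innH, Nat.add_sub_cancel, sum_Icc_one_eq_sum_range, ← sum_mul, tsum_mul_right]

lemma tsum_sum_mul_conj_self :
    ∑' j, ∑ i ∈ range n, W (j + 1) (i + 1) * conj (W (j + 1) (i + 1)) =
      ((∑' j, ∑ i ∈ range n, ‖W (j + 1) (i + 1)‖ ^ 2 : ℝ) : ℂ) := by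
  push_cast
  simp only [Complex.mul_conj']

lemma ofReal_le_tsum_sum_sNx {hx : ℝ} (hx0 : hx ≠ 0) (hW : memH (n + 1) W) :
    ((2 / 3 * ∑' j, ∑ i ∈ range n, ‖W (j + 1) (i + 1)‖ ^ 2 : ℝ) : ℂ) ≤
      ∑' j, ∑ i ∈ range n, sNx (n + 1) hx W (j + 1) (i + 1) * conj (W (j + 1) (i + 1)) := by
  have hcol : ∀ i ∈ range n, Summable fun j => ‖W j (i + 1)‖ ^ 2 := fun i hi =>
    hW.summable_sq_norm (by rw [mem_range] at hi; omega)
  calc _ = ∑ i ∈ range n, ((2 / 3 * ∑' j, ‖W (j + 1) (i + 1)‖ ^ 2 : ℝ) : ℂ) := by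
        rw [Summable.tsum_finsetSum fun i hi => (summable_nat_add_iff 1).2 (hcol i hi), mul_sum]
        push_cast; rfl
    _ ≤ ∑ i ∈ range n, ∑' j, numerovTerm (fun j => W j (i + 1)) j :=
        sum_le_sum fun i hi => ofReal_le_tsum_numerovTerm (hcol i hi) (hW.1 _)
    _ = _ := by
        rw [← Summable.tsum_finsetSum fun i hi => (hasSum_numerovTerm (hcol i hi) (hW.1 _)).summable]
        exact tsum_congr fun j => sum_congr rfl fun i hi =>
          (sNx_mul_conj_eq_numerovTerm hx0 (by rw [mem_range] at hi; omega) j).symm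

lemma ofReal_le_tsum_sum_sNy {hy : ℝ} (hy0 : hy ≠ 0) (hW : memH (n + 1) W) :
    ((2 / 3 * ∑' j, ∑ i ∈ range n, ‖W (j + 1) (i + 1)‖ ^ 2 : ℝ) : ℂ) ≤
      ∑' j, ∑ i ∈ range n, sNy (n + 1) hy W (j + 1) (i + 1) * conj (W (j + 1) (i + 1)) := by
  have hrows : Summable fun j => ∑ i ∈ range n, ‖W (j + 1) (i + 1)‖ ^ 2 :=
    summable_sum fun i hi => (summable_nat_add_iff 1).2 (hW.summable_sq_norm (by rw [mem_range] at hi; omega))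
  rw [tsum_congr fun j => sum_congr rfl fun i hi =>
    sNy_mul_conj_eq_numerovTerm hy0 (by rw [mem_range] at hi; omega) j, ← tsum_mul_left, Complex.ofReal_tsum]
  exact Summable.tsum_le_tsum (fun j => ofReal_le_sum_range_numerovTerm (hW.2.1 _) (hW.2.2.1 _))
    (Complex.summable_ofReal.2 (hrows.mul_left _))
    (summable_sum fun i hi => hW.summable_numerovTerm_row (by rw [mem_range] at hi; omega))

end Mesh

/-- for every `W ∈ H_h`, the inner products `(s_{Nx}W, W)` and `(s_{Ny}W, W)`
are real and are bounded below by `(2/3)‖W‖²`. -/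
theorem stmt0 (K : ℕ) (hK : 2 ≤ K) (hx hy : ℝ) (hhx : 0 < hx) (hhy : 0 < hy)
    (W : ℕ → ℕ → ℂ) (hW : memH K W) :
    (innH K hx hy (sNx K hx W) W).im = 0 ∧
    (innH K hx hy (sNy K hy W) W).im = 0 ∧
    2 / 3 * (innH K hx hy W W).re ≤ (innH K hx hy (sNx K hx W) W).re ∧
    2 / 3 * (innH K hx hy W W).re ≤ (innH K hx hy (sNy K hy W) W).re := by
  obtain ⟨n, rfl⟩ : ∃ n, K = n + 1 := ⟨K - 1, by omega⟩
  have hc : (0 : ℂ) ≤ ((hx * hy : ℝ) : ℂ) := Complex.zero_le_real.2 (mul_pos hhx hhy).le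
  have hX := mul_le_mul_of_nonneg_right (ofReal_le_tsum_sum_sNx hhx.ne' hW) hc
  have hY := mul_le_mul_of_nonneg_right (ofReal_le_tsum_sum_sNy hhy.ne' hW) hc
  rw [← innH_succ, Complex.le_def] at hX hY
  simp only [innH_succ hx hy W W, tsum_sum_mul_conj_self, ← Complex.ofReal_mul, Complex.ofReal_re,
    Complex.ofReal_im] at hX hY ⊢
  exact ⟨hX.2.symm, hY.2.symm, by linarith [hX.1], by linarith [hY.1]⟩
end
end

section
/- For every W in H_h, the inner product (s_N W, W)_{H_h} is real and satisfies (s_N W, W)_{H_h} >= (1/3)*||W||_{H_h}^2. -/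
/-! Summation by parts, using the zero boundary values, turns each second-difference form into
minus a discrete Dirichlet energy, `(∂_x ∂̄_x W, W) = -(h_y / h_x) ∑_{j ≥ 0, k} |W_{j+1,k} - W_{j,k}|²`,
and likewise in `y`; so `(s_N W, W)` is real. Since `|a - b|² ≤ 2|a|² + 2|b|²`, each of the two
energy terms is at most `(4 / h²) ‖W‖²`, whence `(s_N W, W) ≥ (1 - 1/3 - 1/3) ‖W‖²`. -/

noncomputable section

/-- The full Numerov average `s_N = I + (h_x^2/12) ∂_x ∂̄_x + (h_y^2/12) ∂_y ∂̄_y`. -/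
def sN (K : ℕ) (hx hy : ℝ) (W : ℕ → ℕ → ℂ) : ℕ → ℕ → ℂ := fun j k =>
  W j k + ((hx ^ 2 / 12 : ℝ) : ℂ) * ddx K hx W j k + ((hy ^ 2 / 12 : ℝ) : ℂ) * ddy K hy W j k

/-- The Numerov discretization `Δ_{hN} = s_{Ny} ∂_x ∂̄_x + s_{Nx} ∂_y ∂̄_y` of the Laplacian. -/
def deltaHN (K : ℕ) (hx hy : ℝ) (W : ℕ → ℕ → ℂ) : ℕ → ℕ → ℂ := fun j k =>
  sNy K hy (ddx K hx W) j k + sNx K hx (ddy K hy W) j k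

/-- The norm `‖W‖_{H_h}`. -/
def nrmH (K : ℕ) (hx hy : ℝ) (W : ℕ → ℕ → ℂ) : ℝ :=
  Real.sqrt (innH K hx hy W W).re

open Finset ComplexConjugate

lemma sum_Icc_one_sub_one_eq_sum_range {M : Type*} [AddCommMonoid M] (f : ℕ → M) (K : ℕ) :
    ∑ k ∈ Icc 1 (K - 1), f k = ∑ k ∈ range (K - 1), f (k + 1) := by
  rw [range_eq_Ico, sum_Ico_add', ← Finset.Ico_add_one_right_eq_Icc]

lemma norm_sub_sq_le {E : Type*} [SeminormedAddCommGroup E] (a b : E) :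
    ‖a - b‖ ^ 2 ≤ 2 * (‖a‖ ^ 2 + ‖b‖ ^ 2) :=
  (pow_le_pow_left₀ (norm_nonneg _) (norm_sub_le a b) 2).trans add_sq_le

lemma Summable.mul_of_sq_norm {ι R : Type*} [NormedRing R] [CompleteSpace R] {f g : ι → R}
    (hf : Summable fun i => ‖f i‖ ^ 2) (hg : Summable fun i => ‖g i‖ ^ 2) :
    Summable fun i => f i * g i :=
  Summable.of_norm_bounded ((hf.add hg).div_const 2) fun i =>
    (norm_mul_le _ _).trans (by nlinarith [two_mul_le_add_sq ‖f i‖ ‖g i‖])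

lemma summable_sq_norm_sub {E : Type*} [SeminormedAddCommGroup E] {v : ℕ → E}
    (hv : Summable fun j => ‖v j‖ ^ 2) : Summable fun j => ‖v (j + 1) - v j‖ ^ 2 :=
  .of_nonneg_of_le (fun _ => sq_nonneg _) (fun _ => norm_sub_sq_le _ _)
    ((((summable_nat_add_iff 1).2 hv).add hv).mul_left 2)

lemma tsum_sq_norm_sub_le {E : Type*} [SeminormedAddCommGroup E] {v : ℕ → E} (h0 : v 0 = 0)
    (hv : Summable fun j => ‖v j‖ ^ 2) :
    ∑' j, ‖v (j + 1) - v j‖ ^ 2 ≤ 4 * ∑' j, ‖v (j + 1)‖ ^ 2 := by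
  have hv1 : Summable fun j => ‖v (j + 1)‖ ^ 2 := (summable_nat_add_iff 1).2 hv
  calc ∑' j, ‖v (j + 1) - v j‖ ^ 2 ≤ ∑' j, 2 * (‖v (j + 1)‖ ^ 2 + ‖v j‖ ^ 2) :=
        Summable.tsum_le_tsum (fun j => norm_sub_sq_le _ _) (summable_sq_norm_sub hv)
          ((hv1.add hv).mul_left 2)
    _ = 4 * ∑' j, ‖v (j + 1)‖ ^ 2 := by
        rw [tsum_mul_left, hv1.tsum_add hv, hv.tsum_eq_zero_add, h0, norm_zero]
        ring

lemma sum_sq_norm_sub_le {E : Type*} [SeminormedAddCommGroup E] {v : ℕ → E} {K : ℕ}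
    (h0 : v 0 = 0) (hK : v K = 0) :
    ∑ k ∈ range K, ‖v (k + 1) - v k‖ ^ 2 ≤ 4 * ∑ k ∈ Icc 1 (K - 1), ‖v k‖ ^ 2 := by
  calc ∑ k ∈ range K, ‖v (k + 1) - v k‖ ^ 2
      ≤ ∑ k ∈ range K, 2 * (‖v (k + 1)‖ ^ 2 + ‖v k‖ ^ 2) :=
        sum_le_sum fun k _ => norm_sub_sq_le _ _
    _ = 4 * ∑ k ∈ Icc 1 (K - 1), ‖v k‖ ^ 2 := by
        obtain _ | n := K
        · simp
        rw [sum_Icc_one_sub_one_eq_sum_range, ← mul_sum, sum_add_distrib, sum_range_succ,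
          sum_range_succ' (fun k => ‖v k‖ ^ 2), hK, h0]
        simp only [norm_zero, add_tsub_cancel_right]
        ring

-- Summation by parts in pointwise form: the first two terms on the right telescope.
lemma secondDiff_mul_conj (a b c : ℂ) :
    (c - 2 * b + a) * conj b = (c - b) * conj b - (b - a) * conj a - ‖b - a‖ ^ 2 := by
  rw [← Complex.mul_conj', map_sub]
  ring

lemma hasSum_secondDiff_mul_conj {v : ℕ → ℂ} (h0 : v 0 = 0) (hv : Summable fun j => ‖v j‖ ^ 2) :
    HasSum (fun j => (v (j + 2) - 2 * v (j + 1) + v j) * conj (v (j + 1)))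
      (-(∑' j, ‖v (j + 1) - v j‖ ^ 2 : ℝ)) := by
  set a : ℕ → ℂ := fun j => (v (j + 1) - v j) * conj (v j)
  have hd := summable_sq_norm_sub hv
  have ha : Summable a := hd.mul_of_sq_norm (by simpa using hv)
  have htel : HasSum (fun j => a (j + 1) - a j) 0 := by
    simpa [a, h0] using ((hasSum_nat_add_iff' 1).2 ha.hasSum).sub ha.hasSum
  have hterm : (fun j => (v (j + 2) - 2 * v (j + 1) + v j) * conj (v (j + 1))) =
      fun j => a (j + 1) - a j - (‖v (j + 1) - v j‖ ^ 2 : ℝ) := by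
    funext j
    push_cast
    exact secondDiff_mul_conj _ _ _
  rw [hterm, neg_eq_zero_sub]
  exact htel.sub (Complex.hasSum_ofReal.2 hd.hasSum)

lemma sum_secondDiff_mul_conj {v : ℕ → ℂ} {K : ℕ} (h0 : v 0 = 0) (hK : v K = 0) :
    ∑ k ∈ Icc 1 (K - 1), (v (k + 1) - 2 * v k + v (k - 1)) * conj (v k) =
      -(∑ k ∈ range K, ‖v (k + 1) - v k‖ ^ 2 : ℝ) := by
  obtain _ | n := K
  · simp
  have hlast : (v (n + 1) - v n) * conj (v n) = -(‖v (n + 1) - v n‖ ^ 2 : ℂ) := by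
    rw [hK, zero_sub, norm_neg, neg_mul, Complex.mul_conj']
  rw [sum_Icc_one_sub_one_eq_sum_range]
  simp only [add_tsub_cancel_right, secondDiff_mul_conj]
  rw [sum_sub_distrib, sum_range_sub (fun k => (v (k + 1) - v k) * conj (v k)), hlast, h0,
    map_zero, mul_zero, sub_zero, sum_range_succ]
  push_cast
  ring

def sqNormH (K : ℕ) (W : ℕ → ℕ → ℂ) : ℝ :=
  ∑' j, ∑ k ∈ Icc 1 (K - 1), ‖W (j + 1) k‖ ^ 2

def energyX (K : ℕ) (W : ℕ → ℕ → ℂ) : ℝ :=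
  ∑ k ∈ Icc 1 (K - 1), ∑' j, ‖W (j + 1) k - W j k‖ ^ 2

def energyY (K : ℕ) (W : ℕ → ℕ → ℂ) : ℝ :=
  ∑' j, ∑ k ∈ range K, ‖W (j + 1) (k + 1) - W (j + 1) k‖ ^ 2

lemma ddx_succ_of_mem {K k : ℕ} (hx : ℝ) (W : ℕ → ℕ → ℂ) (j : ℕ) (hk : k ∈ Icc 1 (K - 1)) :
    ddx K hx W (j + 1) k = (W (j + 2) k - 2 * W (j + 1) k + W j k) / (hx : ℂ) ^ 2 := by
  rw [mem_Icc] at hk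
  rw [ddx, if_neg (by omega)]
  rfl

lemma ddy_succ_of_mem {K k : ℕ} (hy : ℝ) (W : ℕ → ℕ → ℂ) (j : ℕ) (hk : k ∈ Icc 1 (K - 1)) :
    ddy K hy W (j + 1) k =
      (W (j + 1) (k + 1) - 2 * W (j + 1) k + W (j + 1) (k - 1)) / (hy : ℂ) ^ 2 := by
  rw [mem_Icc] at hk
  rw [ddy, if_neg (by omega)]

namespace memH

variable {K : ℕ} {W : ℕ → ℕ → ℂ}

lemma summable_sum_sq_norm (hW : memH K W) :
    Summable fun j => ∑ k ∈ Icc 1 (K - 1), ‖W (j + 1) k‖ ^ 2 :=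
  (summable_nat_add_iff (f := fun j => ∑ k ∈ Icc 1 (K - 1), ‖W j k‖ ^ 2) 1).2 hW.2.2.2

lemma summable_sq_norm_s1 {k : ℕ} (hW : memH K W) (hk : k ∈ Icc 1 (K - 1)) :
    Summable fun j => ‖W j k‖ ^ 2 :=
  .of_nonneg_of_le (fun _ => sq_nonneg _)
    (fun j => single_le_sum (f := fun i => ‖W j i‖ ^ 2) (fun _ _ => sq_nonneg _) hk) hW.2.2.2

lemma hasSum_mul_conj_self (hW : memH K W) :
    HasSum (fun j => ∑ k ∈ Icc 1 (K - 1), W (j + 1) k * conj (W (j + 1) k)) (sqNormH K W) := by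
  simp only [Complex.mul_conj']
  exact_mod_cast hW.summable_sum_sq_norm.hasSum

lemma hasSum_ddx_mul_conj (hx : ℝ) (hW : memH K W) :
    HasSum (fun j => ∑ k ∈ Icc 1 (K - 1), ddx K hx W (j + 1) k * conj (W (j + 1) k))
      (-(energyX K W / hx ^ 2 : ℝ)) := by
  have h := hasSum_sum fun k hk =>
    (hasSum_secondDiff_mul_conj (v := fun j => W j k) (hW.1 k) (hW.summable_sq_norm_s1 hk)).div_const
      ((hx : ℂ) ^ 2)
  have hval : (-(energyX K W / hx ^ 2 : ℝ) : ℂ) =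
      ∑ k ∈ Icc 1 (K - 1), -(∑' j, ‖W (j + 1) k - W j k‖ ^ 2 : ℝ) / (hx : ℂ) ^ 2 := by
    simp only [energyX, neg_div, sum_neg_distrib, ← sum_div]
    push_cast
    rfl
  rw [hval]
  exact h.congr_fun fun j =>
    sum_congr rfl fun k hk => by rw [ddx_succ_of_mem hx W j hk, div_mul_eq_mul_div]

lemma energyX_le (hW : memH K W) : energyX K W ≤ 4 * sqNormH K W := by
  calc energyX K W ≤ ∑ k ∈ Icc 1 (K - 1), 4 * ∑' j, ‖W (j + 1) k‖ ^ 2 :=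
        sum_le_sum fun k hk => tsum_sq_norm_sub_le (hW.1 k) (hW.summable_sq_norm_s1 hk)
    _ = 4 * sqNormH K W := by
        rw [← mul_sum, sqNormH, Summable.tsum_finsetSum fun k hk =>
          (summable_nat_add_iff 1).2 (hW.summable_sq_norm_s1 hk)]

lemma summable_energyY (hW : memH K W) :
    Summable fun j => ∑ k ∈ range K, ‖W (j + 1) (k + 1) - W (j + 1) k‖ ^ 2 :=
  .of_nonneg_of_le (fun _ => sum_nonneg fun _ _ => sq_nonneg _)
    (fun j => sum_sq_norm_sub_le (hW.2.1 (j + 1)) (hW.2.2.1 (j + 1)))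
    (hW.summable_sum_sq_norm.mul_left 4)

lemma hasSum_ddy_mul_conj (hy : ℝ) (hW : memH K W) :
    HasSum (fun j => ∑ k ∈ Icc 1 (K - 1), ddy K hy W (j + 1) k * conj (W (j + 1) k))
      (-(energyY K W / hy ^ 2 : ℝ)) := by
  have h := (Complex.hasSum_ofReal.2 hW.summable_energyY.hasSum).neg.div_const ((hy : ℂ) ^ 2)
  rw [energyY, Complex.ofReal_div, Complex.ofReal_pow, ← neg_div]
  refine h.congr_fun fun j => ?_
  rw [← sum_secondDiff_mul_conj (hW.2.1 (j + 1)) (hW.2.2.1 (j + 1)), sum_div]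
  exact sum_congr rfl fun k hk => by rw [ddy_succ_of_mem hy W j hk, div_mul_eq_mul_div]

lemma energyY_le (hW : memH K W) : energyY K W ≤ 4 * sqNormH K W := by
  rw [sqNormH, ← tsum_mul_left]
  exact Summable.tsum_le_tsum (fun j => sum_sq_norm_sub_le (hW.2.1 (j + 1)) (hW.2.2.1 (j + 1)))
    hW.summable_energyY (hW.summable_sum_sq_norm.mul_left 4)

lemma hasSum_sN_mul_conj {hx hy : ℝ} (hx0 : hx ≠ 0) (hy0 : hy ≠ 0) (hW : memH K W) :
    HasSum (fun j => ∑ k ∈ Icc 1 (K - 1), sN K hx hy W (j + 1) k * conj (W (j + 1) k))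
      (sqNormH K W - energyX K W / 12 - energyY K W / 12 : ℝ) := by
  have hval : ((sqNormH K W - energyX K W / 12 - energyY K W / 12 : ℝ) : ℂ) =
      sqNormH K W + ((hx ^ 2 / 12 : ℝ) : ℂ) * (-(energyX K W / hx ^ 2 : ℝ) : ℂ) +
        ((hy ^ 2 / 12 : ℝ) : ℂ) * (-(energyY K W / hy ^ 2 : ℝ) : ℂ) := by
    have hx0' : (hx : ℂ) ≠ 0 := Complex.ofReal_ne_zero.2 hx0
    have hy0' : (hy : ℂ) ≠ 0 := Complex.ofReal_ne_zero.2 hy0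
    push_cast
    field_simp
    ring
  rw [hval]
  refine ((hW.hasSum_mul_conj_self.add ((hW.hasSum_ddx_mul_conj hx).mul_left _)).add
    ((hW.hasSum_ddy_mul_conj hy).mul_left _)).congr_fun fun j => ?_
  simp only [sN, mul_sum, ← sum_add_distrib]
  exact sum_congr rfl fun k _ => by ring

end memH

lemma innH_eq_of_hasSum {K : ℕ} {hx hy r : ℝ} {U W : ℕ → ℕ → ℂ}
    (h : HasSum (fun j => ∑ k ∈ Icc 1 (K - 1), U (j + 1) k * conj (W (j + 1) k)) (r : ℂ)) :
    innH K hx hy U W = (r * (hx * hy) : ℝ) := by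
  rw [innH, Complex.ofReal_mul r]
  exact ((h.mul_right _).congr_fun fun j => (sum_mul _ _ _).symm).tsum_eq

theorem stmt1_general (K : ℕ) (hx hy : ℝ) (hhx : 0 < hx) (hhy : 0 < hy)
    (W : ℕ → ℕ → ℂ) (hW : memH K W) :
    (innH K hx hy (sN K hx hy W) W).im = 0 ∧
    1 / 3 * (innH K hx hy W W).re ≤ (innH K hx hy (sN K hx hy W) W).re := by
  rw [innH_eq_of_hasSum (hW.hasSum_sN_mul_conj hhx.ne' hhy.ne'),
    innH_eq_of_hasSum hW.hasSum_mul_conj_self, Complex.ofReal_im, Complex.ofReal_re,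
    Complex.ofReal_re]
  refine ⟨rfl, ?_⟩
  have hc : 0 < hx * hy := mul_pos hhx hhy
  nlinarith [hW.energyX_le, hW.energyY_le]

/-- for every `W ∈ H_h`, `(s_N W, W)_{H_h}` is real and `≥ (1/3)‖W‖²`. -/
theorem stmt1 (K : ℕ) (hK : 2 ≤ K) (hx hy : ℝ) (hhx : 0 < hx) (hhy : 0 < hy)
    (W : ℕ → ℕ → ℂ) (hW : memH K W) :
    (innH K hx hy (sN K hx hy W) W).im = 0 ∧
    1 / 3 * (innH K hx hy W W).re ≤ (innH K hx hy (sN K hx hy W) W).re :=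
  stmt1_general K hx hy hhx hhy W hW
end
end

section
/- The bounded linear operator s_N : H_h -> H_h is bijective, and its inverse is bounded with operator norm at most 3; equivalently, for every W in H_h one has ||W||_{H_h} <= 3*||s_N W||_{H_h}, and for every F in H_h there is a unique W in H_h with s_N W = F. -/
noncomputable section

/-!
On interior nodes the mesh sizes cancel and `s_N = I + A` with
`A W = (W_{j+1,k} + W_{j-1,k} + W_{j,k+1} + W_{j,k-1} - 4 W_{j,k}) / 12`.
Extending mesh functions by zero off the interior embeds `H_h` into `ℓ²(ℕ × ℕ)`, scaling the
norm by `√(h_x h_y)`, and `A` becomes a combination of shifts restricted to the interior, each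
of norm at most `1`. Hence `‖A‖ ≤ 8/12 = 2/3`, so `I + A` is invertible by the Neumann series,
and `‖W‖ ≤ ‖(I + A) W‖ + (2/3) ‖W‖` gives `‖W‖ ≤ 3 ‖s_N W‖`. As `I + A` is the identity off
the interior, the preimage of a vector supported in the interior is again supported there, so
it comes from a mesh function.
-/

open scoped ENNReal

namespace lp

variable {ι 𝕜 E : Type*} [NontriviallyNormedField 𝕜] [NormedAddCommGroup E] [NormedSpace 𝕜 E]
  {p : ℝ≥0∞} {S : Set ι} {σ : ι → ι}

theorem sum_indicator_comp_rpow_le (hp : 0 < p.toReal) (hσ : S.InjOn σ)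
    (f : lp (fun _ : ι => E) p) (s : Finset ι) :
    ∑ i ∈ s, ‖S.indicator (f ∘ σ) i‖ ^ p.toReal ≤ ‖f‖ ^ p.toReal := by
  classical
  calc ∑ i ∈ s, ‖S.indicator (f ∘ σ) i‖ ^ p.toReal
      = ∑ i ∈ s.filter (· ∈ S), ‖f (σ i)‖ ^ p.toReal := by
        rw [Finset.sum_filter]
        refine Finset.sum_congr rfl fun i _ => ?_
        by_cases hi : i ∈ S <;> simp [hi, Real.zero_rpow hp.ne']
    _ = ∑ j ∈ (s.filter (· ∈ S)).image σ, ‖f j‖ ^ p.toReal :=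
        (Finset.sum_image (f := fun j => ‖f j‖ ^ p.toReal) fun i hi j hj =>
          hσ (Finset.mem_filter.1 hi).2 (Finset.mem_filter.1 hj).2).symm
    _ ≤ ‖f‖ ^ p.toReal := sum_rpow_le_norm_rpow hp f _

variable [Fact (1 ≤ p)]

theorem memℓp_indicator_comp (hp : p ≠ ∞) (hσ : S.InjOn σ) (f : lp (fun _ : ι => E) p) :
    Memℓp (S.indicator (f ∘ σ)) p :=
  memℓp_gen' (sum_indicator_comp_rpow_le
    (ENNReal.toReal_pos (zero_lt_one.trans_le Fact.out).ne' hp) hσ f)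

variable (𝕜) in
def indicatorCompCLM (hp : p ≠ ∞) (hσ : S.InjOn σ) :
    lp (fun _ : ι => E) p →L[𝕜] lp (fun _ : ι => E) p :=
  LinearMap.mkContinuous
    { toFun := fun f => ⟨S.indicator (f ∘ σ), memℓp_indicator_comp hp hσ f⟩
      map_add' := fun f g => lp.ext (S.indicator_add' (f ∘ σ) (g ∘ σ))
      map_smul' := fun c f => lp.ext (S.indicator_const_smul c (f ∘ σ)) }
    1 fun f => by
      have hp' := ENNReal.toReal_pos (zero_lt_one.trans_le Fact.out).ne' hp
      rw [one_mul]
      exact norm_le_of_forall_sum_le hp' (norm_nonneg _) (sum_indicator_comp_rpow_le hp' hσ f)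

theorem indicatorCompCLM_apply (hp : p ≠ ∞) (hσ : S.InjOn σ) (f : lp (fun _ : ι => E) p) :
    ⇑(indicatorCompCLM 𝕜 hp hσ f) = S.indicator (f ∘ σ) :=
  rfl

variable (𝕜) in
theorem norm_indicatorCompCLM_le (hp : p ≠ ∞) (hσ : S.InjOn σ) :
    ‖indicatorCompCLM (E := E) 𝕜 hp hσ‖ ≤ 1 :=
  LinearMap.mkContinuous_norm_le _ zero_le_one _

end lp

theorem ContinuousLinearMap.one_sub_mul_norm_le_norm_add_apply {𝕜 E : Type*}
    [NontriviallyNormedField 𝕜] [NormedAddCommGroup E] [NormedSpace 𝕜 E]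
    {A : E →L[𝕜] E} {c : ℝ} (hA : ‖A‖ ≤ c) (x : E) : (1 - c) * ‖x‖ ≤ ‖x + A x‖ := by
  have hx : ‖x‖ ≤ ‖x + A x‖ + ‖A x‖ := by
    simpa using norm_sub_le (x + A x) (A x)
  nlinarith [A.le_of_opNorm_le hA x]

abbrev MeshL2 : Type := lp (fun _ : ℕ × ℕ => ℂ) 2

def meshInterior (K : ℕ) : Set (ℕ × ℕ) := {q | q.1 ≠ 0 ∧ q.2 ≠ 0 ∧ q.2 < K}

variable {K : ℕ}

theorem mem_meshInterior {j k : ℕ} : (j, k) ∈ meshInterior K ↔ ¬(j = 0 ∨ k = 0 ∨ K ≤ k) := by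
  simp [meshInterior]

theorem injOn_succ_fst (K : ℕ) : (meshInterior K).InjOn fun q => (q.1 + 1, q.2) :=
  fun a _ b _ h => by simp_all [Prod.ext_iff]

theorem injOn_pred_fst (K : ℕ) : (meshInterior K).InjOn fun q => (q.1 - 1, q.2) :=
  fun a ha b hb h => by
    simp only [meshInterior, Set.mem_ofPred_eq, Prod.mk.injEq] at ha hb h
    ext <;> omega

theorem injOn_succ_snd (K : ℕ) : (meshInterior K).InjOn fun q => (q.1, q.2 + 1) :=
  fun a _ b _ h => by simp_all [Prod.ext_iff]

theorem injOn_pred_snd (K : ℕ) : (meshInterior K).InjOn fun q => (q.1, q.2 - 1) :=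
  fun a ha b hb h => by
    simp only [meshInterior, Set.mem_ofPred_eq, Prod.mk.injEq] at ha hb h
    ext <;> omega

variable (K) in
def numerovCorrection : MeshL2 →L[ℂ] MeshL2 :=
  (12 : ℂ)⁻¹ • (lp.indicatorCompCLM ℂ (p := 2) ENNReal.ofNat_ne_top (injOn_succ_fst K)
    + lp.indicatorCompCLM ℂ (p := 2) ENNReal.ofNat_ne_top (injOn_pred_fst K)
    + lp.indicatorCompCLM ℂ (p := 2) ENNReal.ofNat_ne_top (injOn_succ_snd K)
    + lp.indicatorCompCLM ℂ (p := 2) ENNReal.ofNat_ne_top (injOn_pred_snd K)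
    - (4 : ℂ) • lp.indicatorCompCLM ℂ (p := 2) ENNReal.ofNat_ne_top (Set.injOn_id (meshInterior K)))

theorem numerovCorrection_apply (f : MeshL2) :
    ⇑(numerovCorrection K f) = (meshInterior K).indicator fun q => (12 : ℂ)⁻¹ *
      (f (q.1 + 1, q.2) + f (q.1 - 1, q.2) + f (q.1, q.2 + 1) + f (q.1, q.2 - 1) - 4 * f q) := by
  ext q
  simp only [numerovCorrection, smul_apply, add_apply, sub_apply, lp.coeFn_smul, lp.coeFn_add,
    lp.coeFn_sub, lp.indicatorCompCLM_apply]
  rw [Pi.smul_apply, Pi.sub_apply, Pi.add_apply, Pi.add_apply, Pi.add_apply, Pi.smul_apply]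
  by_cases hq : q ∈ meshInterior K <;> simp [hq]

variable (K) in
theorem norm_numerovCorrection_le : ‖numerovCorrection K‖ ≤ 2 / 3 := by
  have hT : ∀ {σ : ℕ × ℕ → ℕ × ℕ} (hσ : (meshInterior K).InjOn σ),
      ‖lp.indicatorCompCLM (E := ℂ) ℂ (p := 2) ENNReal.ofNat_ne_top hσ‖ ≤ 1 :=
    fun hσ => lp.norm_indicatorCompCLM_le ℂ _ hσ
  rw [numerovCorrection, norm_smul, norm_inv, Complex.norm_ofNat]
  grw [norm_sub_le, norm_add₄_le, norm_smul, Complex.norm_ofNat, hT, hT, hT, hT, hT]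
  norm_num

def numerovOp (K : ℕ) : MeshL2 →L[ℂ] MeshL2 := 1 + numerovCorrection K

variable (K) in
theorem numerovOp_bijective : Function.Bijective (numerovOp K) := by
  refine ContinuousLinearMap.isUnit_iff_bijective.1 ?_
  have h : ‖-numerovCorrection K‖ < 1 := by
    rw [norm_neg]; linarith [norm_numerovCorrection_le K]
  simpa [numerovOp] using isUnit_one_sub_of_norm_lt_one h

variable (K) in
theorem norm_le_three_mul_norm_numerovOp (f : MeshL2) : ‖f‖ ≤ 3 * ‖numerovOp K f‖ := by
  have h := ContinuousLinearMap.one_sub_mul_norm_le_norm_add_apply (norm_numerovCorrection_le K) f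
  rw [numerovOp, add_apply, one_apply_eq_self]
  linarith

theorem numerovOp_apply_of_notMem (f : MeshL2) {q : ℕ × ℕ} (hq : q ∉ meshInterior K) :
    numerovOp K f q = f q := by
  rw [numerovOp, add_apply, one_apply_eq_self, lp.coeFn_add, Pi.add_apply, numerovCorrection_apply,
    Set.indicator_of_notMem hq, add_zero]

variable {W : ℕ → ℕ → ℂ}

theorem succ_mem_meshInterior_iff {j k : ℕ} :
    (j + 1, k) ∈ meshInterior K ↔ k ∈ Finset.Icc 1 (K - 1) := by
  simp [meshInterior]; omega

theorem indicator_uncurry_of_le (hW : memH K W) {j k : ℕ} (hk : k ≤ K) :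
    (meshInterior K).indicator (Function.uncurry W) (j, k) = W j k := by
  by_cases hq : (j, k) ∈ meshInterior K
  · simp [hq]
  · rw [Set.indicator_of_notMem hq]
    rcases not_not.1 (mem_meshInterior.not.1 hq) with rfl | rfl | hK
    · exact (hW.1 k).symm
    · exact (hW.2.1 j).symm
    · rw [le_antisymm hk hK, hW.2.2.1]

theorem indicator_uncurry_zero_fst (W : ℕ → ℕ → ℂ) (k : ℕ) :
    (meshInterior K).indicator (Function.uncurry W) (0, k) = 0 :=
  Set.indicator_of_notMem (by simp [meshInterior]) _

theorem hasSum_norm_sq_indicator_uncurry_row (W : ℕ → ℕ → ℂ) (j : ℕ) :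
    HasSum (fun k => ‖(meshInterior K).indicator (Function.uncurry W) (j + 1, k)‖ ^ 2)
      (∑ k ∈ Finset.Icc 1 (K - 1), ‖W (j + 1) k‖ ^ 2) := by
  have hout : ∀ k ∉ Finset.Icc 1 (K - 1),
      ‖(meshInterior K).indicator (Function.uncurry W) (j + 1, k)‖ ^ 2 = 0 := fun k hk => by
    rw [Set.indicator_of_notMem (succ_mem_meshInterior_iff.not.2 hk), norm_zero,
      zero_pow two_ne_zero]
  convert hasSum_sum_of_ne_finset_zero (L := .unconditional ℕ) hout using 1
  refine Finset.sum_congr rfl fun k hk => ?_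
  rw [Set.indicator_of_mem (succ_mem_meshInterior_iff.2 hk), Function.uncurry_apply_pair]

theorem summable_norm_sq_indicator_uncurry_row (W : ℕ → ℕ → ℂ) (j : ℕ) :
    Summable fun k => ‖(meshInterior K).indicator (Function.uncurry W) (j, k)‖ ^ 2 := by
  cases j with
  | zero => simp [indicator_uncurry_zero_fst]
  | succ j => exact (hasSum_norm_sq_indicator_uncurry_row W j).summable

theorem memℓp_indicator_uncurry_iff :
    Memℓp ((meshInterior K).indicator (Function.uncurry W)) 2 ↔
      Summable fun j => ∑ k ∈ Finset.Icc 1 (K - 1), ‖W j k‖ ^ 2 := by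
  rw [memℓp_gen_iff (by norm_num)]
  simp only [ENNReal.toReal_ofNat, Real.rpow_two]
  rw [summable_prod_of_nonneg fun _ => by positivity,
    and_iff_right (summable_norm_sq_indicator_uncurry_row W), ← summable_nat_add_iff 1,
    ← summable_nat_add_iff 1 (f := fun j => ∑ k ∈ Finset.Icc 1 (K - 1), ‖W j k‖ ^ 2)]
  simp only [(hasSum_norm_sq_indicator_uncurry_row W _).tsum_eq]

def toMeshL2 (W : ℕ → ℕ → ℂ) (hW : memH K W) : MeshL2 :=
  ⟨(meshInterior K).indicator (Function.uncurry W), memℓp_indicator_uncurry_iff.2 hW.2.2.2⟩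

theorem coe_toMeshL2 (hW : memH K W) :
    ⇑(toMeshL2 W hW) = (meshInterior K).indicator (Function.uncurry W) :=
  rfl

theorem norm_toMeshL2_sq (hW : memH K W) :
    ‖toMeshL2 W hW‖ ^ 2 = ∑' j, ∑ k ∈ Finset.Icc 1 (K - 1), ‖W (j + 1) k‖ ^ 2 := by
  have h := lp.norm_rpow_eq_tsum (p := 2) (by norm_num) (toMeshL2 W hW)
  have hsum := (lp.memℓp (toMeshL2 W hW)).summable (p := 2) (by norm_num)
  simp only [ENNReal.toReal_ofNat, Real.rpow_two, coe_toMeshL2] at h hsum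
  rw [h, hsum.tsum_prod, hsum.prod.tsum_eq_zero_add]
  simp [indicator_uncurry_zero_fst, (hasSum_norm_sq_indicator_uncurry_row W _).tsum_eq]

theorem re_innH_self (hx hy : ℝ) (W : ℕ → ℕ → ℂ) :
    (innH K hx hy W W).re = hx * hy * ∑' j, ∑ k ∈ Finset.Icc 1 (K - 1), ‖W (j + 1) k‖ ^ 2 := by
  have hterm : ∀ z : ℂ,
      z * (starRingEnd ℂ) z * ((hx * hy : ℝ) : ℂ) = ((hx * hy * ‖z‖ ^ 2 : ℝ) : ℂ) :=
    fun z => by rw [Complex.mul_conj, Complex.normSq_eq_norm_sq]; push_cast; ring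
  simp only [innH, hterm, ← Complex.ofReal_sum, ← Complex.ofReal_tsum, Complex.ofReal_re,
    ← Finset.mul_sum, tsum_mul_left]

theorem nrmH_eq_norm_toMeshL2 {hx hy : ℝ} (hxy : 0 ≤ hx * hy) (hW : memH K W) :
    nrmH K hx hy W = √(hx * hy) * ‖toMeshL2 W hW‖ := by
  rw [nrmH, re_innH_self, ← norm_toMeshL2_sq hW,
    Real.sqrt_mul hxy, Real.sqrt_sq (norm_nonneg _)]

theorem toMeshL2_eq_toMeshL2_iff {V : ℕ → ℕ → ℂ} (hW : memH K W) (hV : memH K V) :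
    toMeshL2 W hW = toMeshL2 V hV ↔ ∀ j k, k ≤ K → W j k = V j k := by
  refine ⟨fun h j k hk => ?_, fun h => lp.ext (funext fun q => ?_)⟩
  · rw [← indicator_uncurry_of_le hW hk, ← indicator_uncurry_of_le hV hk, ← coe_toMeshL2 hW,
      ← coe_toMeshL2 hV, h]
  · by_cases hq : q ∈ meshInterior K
    · simp only [coe_toMeshL2, Set.indicator_of_mem hq]
      exact h q.1 q.2 hq.2.2.le
    · simp only [coe_toMeshL2, Set.indicator_of_notMem hq]

theorem exists_toMeshL2_eq {f : MeshL2} (hf : ∀ q ∉ meshInterior K, f q = 0) :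
    ∃ W hW, toMeshL2 (K := K) W hW = f := by
  have hind : (meshInterior K).indicator (Function.uncurry fun j k => f (j, k)) = f := by
    ext ⟨j, k⟩
    by_cases hq : (j, k) ∈ meshInterior K
    · simp [hq]
    · simp [hq, hf _ hq]
  refine ⟨fun j k => f (j, k), ⟨fun k => hf _ (by simp [meshInterior]),
    fun j => hf _ (by simp [meshInterior]), fun j => hf _ (by simp [meshInterior]),
    memℓp_indicator_uncurry_iff.1 (by rw [hind]; exact lp.memℓp f)⟩, lp.ext hind⟩

theorem sN_apply_of_boundary {hx hy : ℝ} {j k : ℕ} (h : j = 0 ∨ k = 0 ∨ K ≤ k) :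
    sN K hx hy W j k = W j k := by
  simp [sN, ddx, ddy, h]

theorem coe_numerovOp_toMeshL2 {hx hy : ℝ} (hx0 : hx ≠ 0) (hy0 : hy ≠ 0) (hW : memH K W) :
    ⇑(numerovOp K (toMeshL2 W hW)) =
      (meshInterior K).indicator (Function.uncurry (sN K hx hy W)) := by
  ext ⟨j, k⟩
  by_cases hq : (j, k) ∈ meshInterior K
  · have hkK : k < K := hq.2.2
    rw [numerovOp, add_apply, one_apply_eq_self, lp.coeFn_add, Pi.add_apply,
      numerovCorrection_apply, Set.indicator_of_mem hq, Set.indicator_of_mem hq, coe_toMeshL2,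
      indicator_uncurry_of_le hW hkK.le, indicator_uncurry_of_le hW hkK.le,
      indicator_uncurry_of_le hW hkK.le, indicator_uncurry_of_le hW hkK,
      indicator_uncurry_of_le hW (by omega)]
    simp only [Function.uncurry_apply_pair, sN, ddx, ddy, if_neg (mem_meshInterior.1 hq)]
    have hx0' : (hx : ℂ) ≠ 0 := by exact_mod_cast hx0
    have hy0' : (hy : ℂ) ≠ 0 := by exact_mod_cast hy0
    push_cast
    field_simp
    ring
  · rw [numerovOp_apply_of_notMem _ hq, coe_toMeshL2, Set.indicator_of_notMem hq,
      Set.indicator_of_notMem hq]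

theorem memH_sN {hx hy : ℝ} (hx0 : hx ≠ 0) (hy0 : hy ≠ 0) (hW : memH K W) :
    memH K (sN K hx hy W) := by
  refine ⟨fun k => ?_, fun j => ?_, fun j => ?_, ?_⟩
  · rw [sN_apply_of_boundary (.inl rfl), hW.1]
  · rw [sN_apply_of_boundary (.inr (.inl rfl)), hW.2.1]
  · rw [sN_apply_of_boundary (.inr (.inr le_rfl)), hW.2.2.1]
  · rw [← memℓp_indicator_uncurry_iff, ← coe_numerovOp_toMeshL2 hx0 hy0 hW]
    exact lp.memℓp _

theorem toMeshL2_sN {hx hy : ℝ} (hx0 : hx ≠ 0) (hy0 : hy ≠ 0) (hW : memH K W) :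
    toMeshL2 (sN K hx hy W) (memH_sN hx0 hy0 hW) = numerovOp K (toMeshL2 W hW) :=
  lp.ext (coe_numerovOp_toMeshL2 hx0 hy0 hW).symm

theorem stmt2_general (K : ℕ) (hx hy : ℝ) (hhx : 0 < hx) (hhy : 0 < hy) :
    (∀ W : ℕ → ℕ → ℂ, memH K W → memH K (sN K hx hy W)) ∧
    (∀ W : ℕ → ℕ → ℂ, memH K W →
      nrmH K hx hy W ≤ 3 * nrmH K hx hy (sN K hx hy W)) ∧
    (∀ F : ℕ → ℕ → ℂ, memH K F →
      (∃ W : ℕ → ℕ → ℂ, memH K W ∧ ∀ j k, k ≤ K → sN K hx hy W j k = F j k) ∧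
      (∀ W W' : ℕ → ℕ → ℂ, memH K W → memH K W' →
        (∀ j k, k ≤ K → sN K hx hy W j k = F j k) →
        (∀ j k, k ≤ K → sN K hx hy W' j k = F j k) →
        ∀ j k, k ≤ K → W j k = W' j k)) := by
  have hx0 := hhx.ne'
  have hy0 := hhy.ne'
  have hxy := (mul_pos hhx hhy).le
  refine ⟨fun W hW => memH_sN hx0 hy0 hW, fun W hW => ?_, fun F hF => ⟨?_, ?_⟩⟩
  · rw [nrmH_eq_norm_toMeshL2 hxy hW, nrmH_eq_norm_toMeshL2 hxy (memH_sN hx0 hy0 hW),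
      toMeshL2_sN hx0 hy0 hW]
    have h := mul_le_mul_of_nonneg_left (norm_le_three_mul_norm_numerovOp K (toMeshL2 W hW))
      (Real.sqrt_nonneg (hx * hy))
    linarith
  · obtain ⟨f, hf⟩ := (numerovOp_bijective K).2 (toMeshL2 F hF)
    obtain ⟨W, hW, rfl⟩ := exists_toMeshL2_eq fun q hq => by
      rw [← numerovOp_apply_of_notMem f hq, hf, coe_toMeshL2, Set.indicator_of_notMem hq]
    refine ⟨W, hW, (toMeshL2_eq_toMeshL2_iff (memH_sN hx0 hy0 hW) hF).1 ?_⟩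
    rw [toMeshL2_sN hx0 hy0 hW, hf]
  · intro W W' hW hW' hsW hsW'
    rw [← toMeshL2_eq_toMeshL2_iff hW hW']
    apply (numerovOp_bijective K).1
    rw [← toMeshL2_sN hx0 hy0 hW, ← toMeshL2_sN hx0 hy0 hW',
      (toMeshL2_eq_toMeshL2_iff _ hF).2 hsW, (toMeshL2_eq_toMeshL2_iff _ hF).2 hsW']

/-- `s_N : H_h → H_h` is bijective with boundedly invertible inverse of norm
at most `3`: `s_N` maps `H_h` into `H_h`, every `W ∈ H_h` satisfies `‖W‖ ≤ 3‖s_N W‖`, and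
every `F ∈ H_h` has a unique preimage in `H_h` (uniqueness as mesh functions, i.e. on the
mesh `ℕ × {0,…,K}`). -/
theorem stmt2 (K : ℕ) (hK : 2 ≤ K) (hx hy : ℝ) (hhx : 0 < hx) (hhy : 0 < hy) :
    (∀ W : ℕ → ℕ → ℂ, memH K W → memH K (sN K hx hy W)) ∧
    (∀ W : ℕ → ℕ → ℂ, memH K W →
      nrmH K hx hy W ≤ 3 * nrmH K hx hy (sN K hx hy W)) ∧
    (∀ F : ℕ → ℕ → ℂ, memH K F →
      (∃ W : ℕ → ℕ → ℂ, memH K W ∧ ∀ j k, k ≤ K → sN K hx hy W j k = F j k) ∧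
      (∀ W W' : ℕ → ℕ → ℂ, memH K W → memH K W' →
        (∀ j k, k ≤ K → sN K hx hy W j k = F j k) →
        (∀ j k, k ≤ K → sN K hx hy W' j k = F j k) →
        ∀ j k, k ≤ K → W j k = W' j k)) :=
  stmt2_general K hx hy hhx hhy
end
end

section
/- alpha is nonzero, and |alpha|^2 - beta^2 = 4*(Im a)^2 > 0; in particular |beta| < |alpha|, so mu = beta/|alpha| lies in the open interval (-1, 1). -/
theorem Complex.sq_norm_two_mul_add_mul_sq_sub_sq (a : ℂ) (k : ℝ) :
    ‖2 * a + k * a ^ 2‖ ^ 2 - (2 * a.re + k * ‖a‖ ^ 2) ^ 2 = 4 * a.im ^ 2 := by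
  simp only [Complex.sq_norm, Complex.normSq_apply]
  simp only [Complex.add_re, Complex.add_im, Complex.mul_re, Complex.mul_im, Complex.ofReal_re,
    Complex.ofReal_im, pow_two, Complex.re_ofNat, Complex.im_ofNat]
  ring

theorem div_mem_Ioo_neg_one_one_of_abs_lt {x y : ℝ} (h : |x| < y) :
    x / y ∈ Set.Ioo (-1 : ℝ) 1 := by
  have hy : 0 < y := (abs_nonneg x).trans_lt h
  rw [Set.mem_Ioo, ← abs_lt, abs_div, abs_of_pos hy]
  exact (div_lt_one hy).mpr h

theorem stmt11_general (hbar tau hx c : ℝ)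
    (hhbar : 0 < hbar) (htau : 0 < tau) (hc : 0 < c)
    (th : ℝ) (V : ℝ) :
    let a : ℂ := ((V / (2 * c) : ℝ) : ℂ) + Complex.I * ((hbar / (tau * c) : ℝ) : ℂ)
    let alpha : ℂ := 2 * a + (((1 - 4 * th) * hx ^ 2 : ℝ) : ℂ) * a ^ 2
    let beta : ℝ := 2 * a.re + (1 - 4 * th) * hx ^ 2 * ‖a‖ ^ 2
    alpha ≠ 0 ∧
    ‖alpha‖ ^ 2 - beta ^ 2 = 4 * a.im ^ 2 ∧
    0 < ‖alpha‖ ^ 2 - beta ^ 2 ∧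
    |beta| < ‖alpha‖ ∧
    beta / ‖alpha‖ ∈ Set.Ioo (-1 : ℝ) 1 := by
  intro a alpha beta
  have him : 0 < a.im := by
    simp only [a, Complex.add_im, Complex.ofReal_im, Complex.mul_im, Complex.I_re, Complex.I_im,
      Complex.ofReal_re]
    nlinarith [div_pos hhbar (mul_pos htau hc)]
  have hkey : ‖alpha‖ ^ 2 - beta ^ 2 = 4 * a.im ^ 2 :=
    Complex.sq_norm_two_mul_add_mul_sq_sub_sq a _
  have hpos : 0 < ‖alpha‖ ^ 2 - beta ^ 2 := by rw [hkey]; positivity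
  have habs : |beta| < ‖alpha‖ := by
    simpa only [abs_norm] using sq_lt_sq.mp (sub_pos.mp hpos)
  refine ⟨?_, hkey, hpos, habs, div_mem_Ioo_neg_one_one_of_abs_lt habs⟩
  exact norm_pos_iff.mp ((abs_nonneg beta).trans_lt habs)

/-- with `a = V/(2c) + i ℏ/(τ c)`, `α = 2a + (1-4θ)h_x² a²` and
`β = 2 Re a + (1-4θ)h_x² |a|²` for `θ ∈ (1/12, 1/8)`, one has `α ≠ 0` and
`|α|² - β² = 4 (Im a)² > 0`; in particular `|β| < |α|`, so `μ = β/|α| ∈ (-1, 1)`. -/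
theorem stmt11 (hbar tau hx c : ℝ)
    (hhbar : 0 < hbar) (htau : 0 < tau) (hhx : 0 < hx) (hc : 0 < c)
    (th : ℝ) (hth : th ∈ Set.Ioo (1 / 12 : ℝ) (1 / 8)) (V : ℝ) :
    let a : ℂ := ((V / (2 * c) : ℝ) : ℂ) + Complex.I * ((hbar / (tau * c) : ℝ) : ℂ)
    let alpha : ℂ := 2 * a + (((1 - 4 * th) * hx ^ 2 : ℝ) : ℂ) * a ^ 2
    let beta : ℝ := 2 * a.re + (1 - 4 * th) * hx ^ 2 * ‖a‖ ^ 2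
    alpha ≠ 0 ∧
    ‖alpha‖ ^ 2 - beta ^ 2 = 4 * a.im ^ 2 ∧
    0 < ‖alpha‖ ^ 2 - beta ^ 2 ∧
    |beta| < ‖alpha‖ ∧
    beta / ‖alpha‖ ∈ Set.Ioo (-1 : ℝ) 1 :=
  stmt11_general hbar tau hx c hhbar htau hc th V
end

section
/- alpha is not a nonnegative real number, so its argument phi can be chosen in the open interval (0, 2*pi); and the coefficient c_1 = -(|alpha|^{1/2}/2)*e^{-i*phi/2} has nonnegative imaginary part, namely Im c_1 = (|alpha|^{1/2}/2)*sin(phi/2) >= 0. -/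
/-!
Write `a = x + iy` with `y ≠ 0` and `k = (1 - 4θ) h_x² ≥ 0`. Then
`Im (2a + k a²) = 2y (1 + kx)`, so `α` can only be real when `kx = -1`; but then `x < 0` and
`Re α = x (2 + kx) - k y² = x - k y² < 0`. Hence `α` avoids `[0, ∞)`, and shifting `arg (-α)`
by `π` gives an argument in `(0, 2π)`, for which `sin (φ/2) ≥ 0`.
-/

open Complex

lemma Complex.not_im_eq_zero_and_re_nonneg_two_mul_add_mul_sq {a : ℂ} (ha : a.im ≠ 0)
    {k : ℝ} (hk : 0 ≤ k) :
    ¬((2 * a + (k : ℂ) * a ^ 2).im = 0 ∧ 0 ≤ (2 * a + (k : ℂ) * a ^ 2).re) := by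
  rintro ⟨him, hre⟩
  simp only [pow_two, add_im, add_re, mul_im, mul_re, ofReal_re, ofReal_im, re_ofNat,
    im_ofNat] at him hre
  have hkx : k * a.re = -1 := by
    have : 2 * a.im * (1 + k * a.re) = 0 := by linarith
    linarith [(mul_eq_zero.mp this).resolve_left (by positivity)]
  have hx : a.re < 0 := by nlinarith
  nlinarith [mul_nonneg hk (mul_self_nonneg a.im)]

lemma Complex.exists_mem_Ioo_eq_norm_mul_exp {z : ℂ} (hz : ¬(z.im = 0 ∧ 0 ≤ z.re)) :
    ∃ phi ∈ Set.Ioo 0 (2 * Real.pi), z = (‖z‖ : ℂ) * exp (phi * I) := by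
  have hne : arg (-z) ≠ Real.pi := by
    rw [Ne, arg_eq_pi_iff, neg_re, neg_im, neg_eq_zero]
    exact fun ⟨hre, him⟩ => hz ⟨him, by linarith⟩
  refine ⟨arg (-z) + Real.pi, ⟨by linarith [neg_pi_lt_arg (-z)],
    by linarith [lt_of_le_of_ne (arg_le_pi (-z)) hne]⟩, ?_⟩
  rw [ofReal_add, add_mul, exp_add, exp_pi_mul_I, ← norm_neg z, mul_neg_one, mul_neg,
    norm_mul_exp_arg_mul_I, neg_neg]

lemma Complex.im_neg_ofReal_mul_exp_neg_mul_I (r θ : ℝ) :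
    (-(r : ℂ) * exp (-(θ : ℂ) * I)).im = r * Real.sin θ := by
  rw [← ofReal_neg, ← ofReal_neg, im_ofReal_mul, exp_ofReal_mul_I_im, Real.sin_neg, neg_mul_neg]

theorem stmt12_general (hbar tau hx c : ℝ)
    (hhbar : 0 < hbar) (htau : 0 < tau) (hc : 0 < c)
    (th : ℝ) (hth : th ∈ Set.Ioo (1 / 12 : ℝ) (1 / 8)) (V : ℝ) :
    let a : ℂ := ((V / (2 * c) : ℝ) : ℂ) + Complex.I * ((hbar / (tau * c) : ℝ) : ℂ)
    let alpha : ℂ := 2 * a + (((1 - 4 * th) * hx ^ 2 : ℝ) : ℂ) * a ^ 2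
    ¬(alpha.im = 0 ∧ 0 ≤ alpha.re) ∧
    ∃ phi : ℝ, phi ∈ Set.Ioo (0 : ℝ) (2 * Real.pi) ∧
      alpha = ((‖alpha‖ : ℝ) : ℂ) * Complex.exp ((phi : ℂ) * Complex.I) ∧
      (-(((Real.sqrt (‖alpha‖) / 2 : ℝ)) : ℂ)
          * Complex.exp (-((phi / 2 : ℝ) : ℂ) * Complex.I)).im
        = Real.sqrt (‖alpha‖) / 2 * Real.sin (phi / 2) ∧
      0 ≤ (-(((Real.sqrt (‖alpha‖) / 2 : ℝ)) : ℂ)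
          * Complex.exp (-((phi / 2 : ℝ) : ℂ) * Complex.I)).im := by
  intro a alpha
  have ha : a.im ≠ 0 := by
    simp only [a, add_im, ofReal_im, mul_im, I_re, I_im, ofReal_re]
    linarith [div_pos hhbar (mul_pos htau hc)]
  have hk : 0 ≤ (1 - 4 * th) * hx ^ 2 := mul_nonneg (by linarith [hth.2]) (sq_nonneg hx)
  have hslit := not_im_eq_zero_and_re_nonneg_two_mul_add_mul_sq ha hk
  obtain ⟨phi, hphi, hpolar⟩ := exists_mem_Ioo_eq_norm_mul_exp hslit
  refine ⟨hslit, phi, hphi, hpolar, im_neg_ofReal_mul_exp_neg_mul_I _ _, ?_⟩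
  rw [im_neg_ofReal_mul_exp_neg_mul_I]
  exact mul_nonneg (by positivity)
    (Real.sin_nonneg_of_nonneg_of_le_pi (by linarith [hphi.1]) (by linarith [hphi.2]))

/-- with `a = V/(2c) + i ℏ/(τ c)` and `α = 2a + (1-4θ)h_x² a²` for
`θ ∈ (1/12, 1/8)`, `α` is not a nonnegative real number, so its argument `φ` can be
chosen in the open interval `(0, 2π)`; and the coefficient
`c₁ = -(|α|^{1/2}/2) e^{-iφ/2}` has imaginary part `(|α|^{1/2}/2) sin(φ/2) ≥ 0`. -/
theorem stmt12 (hbar tau hx c : ℝ)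
    (hhbar : 0 < hbar) (htau : 0 < tau) (hhx : 0 < hx) (hc : 0 < c)
    (th : ℝ) (hth : th ∈ Set.Ioo (1 / 12 : ℝ) (1 / 8)) (V : ℝ) :
    let a : ℂ := ((V / (2 * c) : ℝ) : ℂ) + Complex.I * ((hbar / (tau * c) : ℝ) : ℂ)
    let alpha : ℂ := 2 * a + (((1 - 4 * th) * hx ^ 2 : ℝ) : ℂ) * a ^ 2
    ¬(alpha.im = 0 ∧ 0 ≤ alpha.re) ∧
    ∃ phi : ℝ, phi ∈ Set.Ioo (0 : ℝ) (2 * Real.pi) ∧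
      alpha = ((‖alpha‖ : ℝ) : ℂ) * Complex.exp ((phi : ℂ) * Complex.I) ∧
      (-(((Real.sqrt (‖alpha‖) / 2 : ℝ)) : ℂ)
          * Complex.exp (-((phi / 2 : ℝ) : ℂ) * Complex.I)).im
        = Real.sqrt (‖alpha‖) / 2 * Real.sin (phi / 2) ∧
      0 ≤ (-(((Real.sqrt (‖alpha‖) / 2 : ℝ)) : ℂ)
          * Complex.exp (-((phi / 2 : ℝ) : ℂ) * Complex.I)).im :=
  stmt12_general hbar tau hx c hhbar htau hc th hth V
end
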